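/- If F is a real symplectic matrix and v ∈ ℝ^{2n} satisfies (I + Fᵀ)v = 0 and (I − Fᵀ)v = 0, then v = 0; more generally, in the proof of invertibility of I + Fᵀ + 𝓜*(I − Fᵀ) with 𝓜 = JM, Im M positive definite: any z ∈ ℂ^{2n} with (I + Fᵀ + 𝓜*(I − Fᵀ))z = 0 satisfies (I − Fᵀ)z = 0 and hence z = 0. -/

import Mathlib

/-!
Write `J` for Mathlib's `Matrix.J` (the paper's `J` is `-J`), `w = (I - Fᵀ) z` and `u = J w`.
The equation says `(I + Fᵀ) z = -M̄ u`, so `u* M̄ u = z* S z` with `S = (I - F) J (I + Fᵀ)`.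
Symplecticity `F J Fᵀ = J` gives `S = J Fᵀ - F J`, a real symmetric matrix, so `z* S z` is real.
For complex symmetric `M` the imaginary part of `u* M̄ u` is `-u* (Im M) u`, hence `u = 0` by
positive definiteness, so `w = 0`; finally `2 z = (I + Fᵀ) z + (I - Fᵀ) z = 0`.
-/

open Matrix Complex

namespace Matrix

lemma eq_zero_of_one_add_mulVec_eq_zero_of_one_sub_mulVec_eq_zero {n R : Type*} [Fintype n]
    [DecidableEq n] [Ring R] [NoZeroDivisors R] [CharZero R] {A : Matrix n n R} {v : n → R}
    (h₁ : (1 + A) *ᵥ v = 0) (h₂ : (1 - A) *ᵥ v = 0) : v = 0 := by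
  have h : v + v = 0 := by
    simpa [add_mulVec, sub_mulVec, add_add_sub_cancel] using congrArg₂ (· + ·) h₁ h₂
  funext i
  exact add_self_eq_zero.mp (congrFun h i)

section ComplexOfReal

variable {n : Type*}

lemma conjTranspose_map_ofReal {m : Type*} (A : Matrix m n ℝ) :
    (A.map ofReal)ᴴ = Aᵀ.map ofReal := by
  rw [← conjTranspose_map _ fun x => (conj_ofReal x).symm, conjTranspose_eq_transpose_of_trivial]

lemma IsSymm.isHermitian_map_ofReal {S : Matrix n n ℝ} (hS : S.IsSymm) :
    (S.map ofReal).IsHermitian :=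
  (isHermitian_iff_isSymm.mpr hS).map _ fun x => (conj_ofReal x).symm

variable [Fintype n]

lemma re_star_dotProduct_map_ofReal_mulVec (Q : Matrix n n ℝ) (x : n → ℂ) :
    (star x ⬝ᵥ Q.map ofReal *ᵥ x).re
      = (re ∘ x) ⬝ᵥ Q *ᵥ (re ∘ x) + (im ∘ x) ⬝ᵥ Q *ᵥ (im ∘ x) := by
  simp only [dotProduct, mulVec, map_apply, Pi.star_apply, RCLike.star_def, Finset.mul_sum,
    re_sum, ← Finset.sum_add_distrib, Function.comp_apply]
  refine Finset.sum_congr rfl fun i _ => Finset.sum_congr rfl fun j _ => ?_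
  simp only [mul_re, mul_im, conj_re, conj_im, ofReal_re, ofReal_im]
  ring

lemma PosDef.re_star_dotProduct_map_ofReal_mulVec_pos {Q : Matrix n n ℝ} (hQ : Q.PosDef)
    {x : n → ℂ} (hx : x ≠ 0) : 0 < (star x ⬝ᵥ Q.map ofReal *ᵥ x).re := by
  have hnonneg (y : n → ℝ) : 0 ≤ y ⬝ᵥ Q *ᵥ y := by
    simpa using hQ.posSemidef.dotProduct_mulVec_nonneg y
  have hpos {y : n → ℝ} (hy : y ≠ 0) : 0 < y ⬝ᵥ Q *ᵥ y := by
    simpa using hQ.dotProduct_mulVec_pos hy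
  rw [re_star_dotProduct_map_ofReal_mulVec]
  by_cases hre : re ∘ x = 0
  · have him : im ∘ x ≠ 0 := fun him =>
      hx (funext fun i => Complex.ext (congrFun hre i) (congrFun him i))
    linarith [hnonneg (re ∘ x), hpos him]
  · linarith [hpos hre, hnonneg (im ∘ x)]

lemma im_star_dotProduct_conjTranspose_mulVec_self {M : Matrix n n ℂ} (hM : Mᵀ = M)
    (x : n → ℂ) : (star x ⬝ᵥ Mᴴ *ᵥ x).im = -(star x ⬝ᵥ (M.map im).map ofReal *ᵥ x).re := by
  have hsymm (f : ℂ → ℝ) : (M.map f).IsSymm := by rw [IsSymm, ← transpose_map, hM]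
  have hdecomp : Mᴴ = (M.map re).map ofReal - I • (M.map im).map ofReal := by
    ext i j
    rw [conjTranspose_apply, ← transpose_apply M, hM]
    apply Complex.ext <;> simp
  have hre := (hsymm re).isHermitian_map_ofReal.im_star_dotProduct_mulVec_self x
  rw [RCLike.im_to_complex] at hre
  rw [hdecomp, sub_mulVec, smul_mulVec, dotProduct_sub, dotProduct_smul, sub_im, hre, smul_eq_mul,
    mul_im, I_re, I_im]
  ring

end ComplexOfReal

section Symplectic

variable {l : Type*} [DecidableEq l]

lemma fromBlocks_zero_one_neg_one_zero_eq_neg_J (R : Type*) [CommRing R] :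
    (fromBlocks 0 1 (-1) 0 : Matrix (l ⊕ l) (l ⊕ l) R) = -J l R := by
  simp [J, fromBlocks_neg]

lemma J_conjTranspose (R : Type*) [CommRing R] [StarRing R] : (J l R)ᴴ = -J l R := by
  simp [J, fromBlocks_conjTranspose, fromBlocks_neg]

variable [Fintype l]

lemma isSymm_one_sub_mul_J_mul_one_add_transpose {R : Type*} [CommRing R]
    {A : Matrix (l ⊕ l) (l ⊕ l) R} (hA : A ∈ symplecticGroup l R) :
    ((1 - A) * J l R * (1 + Aᵀ)).IsSymm := by
  have hexpand : (1 - A) * J l R * (1 + Aᵀ) = J l R * Aᵀ - A * J l R := by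
    calc (1 - A) * J l R * (1 + Aᵀ) = J l R + J l R * Aᵀ - A * J l R - A * J l R * Aᵀ := by
          noncomm_ring
      _ = J l R * Aᵀ - A * J l R := by rw [SymplecticGroup.mem_iff.mp hA]; abel
  rw [hexpand, IsSymm, transpose_sub, transpose_mul, transpose_mul, transpose_transpose,
    J_transpose]
  noncomm_ring

lemma map_ofReal_one_sub_mul_J_mul_one_add_transpose (F : Matrix (l ⊕ l) (l ⊕ l) ℝ) :
    ((1 - F) * J l ℝ * (1 + Fᵀ)).map ofReal
      = (1 - F.map ofReal) * J l ℂ * (1 + (F.map ofReal)ᵀ) := by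
  change ofRealHom.mapMatrix _ = _
  simp only [map_mul, map_sub, map_add, map_one, RingHom.mapMatrix_apply, map_J, transpose_map]
  rfl

lemma star_dotProduct_conjTranspose_mulVec_eq_of_mulVec_eq_zero
    (F : Matrix (l ⊕ l) (l ⊕ l) ℝ) (M : Matrix (l ⊕ l) (l ⊕ l) ℂ) {z : l ⊕ l → ℂ}
    (hz : (1 + (F.map ofReal)ᵀ + (-J l ℂ * M)ᴴ * (1 - (F.map ofReal)ᵀ)) *ᵥ z = 0) :
    star (J l ℂ *ᵥ (1 - (F.map ofReal)ᵀ) *ᵥ z) ⬝ᵥ Mᴴ *ᵥ (J l ℂ *ᵥ (1 - (F.map ofReal)ᵀ) *ᵥ z)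
      = star z ⬝ᵥ ((1 - F) * J l ℝ * (1 + Fᵀ)).map ofReal *ᵥ z := by
  set Fc := F.map ofReal
  set u := J l ℂ *ᵥ (1 - Fcᵀ) *ᵥ z
  have hMu : Mᴴ *ᵥ u = -((1 + Fcᵀ) *ᵥ z) := by
    rw [conjTranspose_mul, conjTranspose_neg, J_conjTranspose, neg_neg, add_mulVec,
      ← mulVec_mulVec, ← mulVec_mulVec] at hz
    exact eq_neg_of_add_eq_zero_right hz
  have hFc : Fcᵀᴴ = Fc := by rw [← transpose_map, conjTranspose_map_ofReal, transpose_transpose]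
  have hu : star u ᵥ* (1 + Fcᵀ) = -(star z ᵥ* ((1 - Fc) * J l ℂ * (1 + Fcᵀ))) := by
    rw [star_mulVec, star_mulVec, J_conjTranspose, conjTranspose_sub, conjTranspose_one, hFc,
      vecMul_vecMul, vecMul_vecMul, neg_mul, mul_neg, ← mul_assoc, vecMul_neg]
  rw [map_ofReal_one_sub_mul_J_mul_one_add_transpose, hMu, dotProduct_neg, dotProduct_mulVec, hu,
    neg_dotProduct, neg_neg, dotProduct_mulVec]

theorem one_sub_transpose_mulVec_eq_zero_of_mulVec_eq_zero
    {F : Matrix (l ⊕ l) (l ⊕ l) ℝ} (hF : F ∈ symplecticGroup l ℝ)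
    {M : Matrix (l ⊕ l) (l ⊕ l) ℂ} (hMsym : Mᵀ = M) (hMpos : (M.map im).PosDef)
    {z : l ⊕ l → ℂ}
    (hz : (1 + (F.map ofReal)ᵀ + (-J l ℂ * M)ᴴ * (1 - (F.map ofReal)ᵀ)) *ᵥ z = 0) :
    (1 - (F.map ofReal)ᵀ) *ᵥ z = 0 := by
  set u := J l ℂ *ᵥ (1 - (F.map ofReal)ᵀ) *ᵥ z with hu_def
  have hu : u = 0 := by
    by_contra hu
    have hreal := (isSymm_one_sub_mul_J_mul_one_add_transpose hF).isHermitian_map_ofReal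
      |>.im_star_dotProduct_mulVec_self z
    rw [RCLike.im_to_complex, ← star_dotProduct_conjTranspose_mulVec_eq_of_mulVec_eq_zero F M hz,
      im_star_dotProduct_conjTranspose_mulVec_self hMsym] at hreal
    linarith [hMpos.re_star_dotProduct_map_ofReal_mulVec_pos hu]
  calc (1 - (F.map ofReal)ᵀ) *ᵥ z = -(J l ℂ *ᵥ u) := by
        rw [hu_def, mulVec_mulVec, J_squared, neg_mulVec, one_mulVec, neg_neg]
    _ = 0 := by rw [hu, mulVec_zero, neg_zero]

end Symplectic

end Matrix

theorem stmt_19 (n : ℕ) (F : Matrix (Fin n ⊕ Fin n) (Fin n ⊕ Fin n) ℝ)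
    (hF : Fᵀ * (Matrix.fromBlocks 0 1 (-1) 0) * F = (Matrix.fromBlocks 0 1 (-1) 0 :
      Matrix (Fin n ⊕ Fin n) (Fin n ⊕ Fin n) ℝ))
    (M : Matrix (Fin n ⊕ Fin n) (Fin n ⊕ Fin n) ℂ) (hMsym : Mᵀ = M)
    (hMpos : (M.map Complex.im).PosDef) :
    (∀ v : (Fin n ⊕ Fin n) → ℝ,
      (1 + Fᵀ) *ᵥ v = 0 → (1 - Fᵀ) *ᵥ v = 0 → v = 0) ∧
    (∀ z : (Fin n ⊕ Fin n) → ℂ,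
      (1 + (F.map Complex.ofReal)ᵀ +
        ((Matrix.fromBlocks 0 1 (-1) 0 : Matrix (Fin n ⊕ Fin n) (Fin n ⊕ Fin n) ℂ) * M)ᴴ *
          (1 - (F.map Complex.ofReal)ᵀ)) *ᵥ z = 0 →
      (1 - (F.map Complex.ofReal)ᵀ) *ᵥ z = 0 ∧ z = 0) := by
  refine ⟨fun v => eq_zero_of_one_add_mulVec_eq_zero_of_one_sub_mulVec_eq_zero, fun z hz => ?_⟩
  have hFsymp : F ∈ symplecticGroup (Fin n) ℝ := by
    rw [SymplecticGroup.mem_iff']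
    simpa [fromBlocks_zero_one_neg_one_zero_eq_neg_J] using hF
  rw [fromBlocks_zero_one_neg_one_zero_eq_neg_J] at hz
  have hw := one_sub_transpose_mulVec_eq_zero_of_mulVec_eq_zero hFsymp hMsym hMpos hz
  rw [add_mulVec, ← mulVec_mulVec, hw, mulVec_zero, add_zero] at hz
  exact ⟨hw, eq_zero_of_one_add_mulVec_eq_zero_of_one_sub_mulVec_eq_zero hz hw⟩
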